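/- arXiv:0904.0924 — 3 statements merged into one kernel-verified Lean document; each statement's English description precedes it below -/
import Mathlib

section
/- Let L be a finite-dimensional Lie algebra over a field F and let B, C be ideals of L. If the quotient Lie algebras L/B and L/C are both A-algebras, then L/(B ∩ C) is an A-algebra. -/
/-- A finite-dimensional Lie algebra is an `A`-algebra if every nilpotent
subalgebra is abelian. -/
def IsAAlgebra (F L : Type*) [Field F] [LieRing L] [LieAlgebra F L] : Prop :=
  ∀ U : LieSubalgebra F L, LieModule.IsNilpotent U U → IsLieAbelian U

/-! The maps `L ⧸ (B ⊓ C) → L ⧸ B` and `L ⧸ (B ⊓ C) → L ⧸ C` are jointly injective. A nilpotent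
subalgebra `U` of `L ⧸ (B ⊓ C)` has nilpotent, hence abelian, images in both quotients, so every
bracket of `U` lies in both kernels and therefore vanishes. -/

def LieIdeal.quotientMapOfLE {R L : Type*} [CommRing R] [LieRing L] [LieAlgebra R L]
    {I J : LieIdeal R L} (h : I ≤ J) : (L ⧸ I) →ₗ⁅R⁆ (L ⧸ J) :=
  { Submodule.mapQ I.toSubmodule J.toSubmodule LinearMap.id h with
    map_lie' := by
      rintro ⟨a⟩ ⟨b⟩
      rfl }

namespace IsAAlgebra

variable {F K L L₁ L₂ : Type*} [Field F] [LieRing K] [LieAlgebra F K] [LieRing L] [LieAlgebra F L]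
  [LieRing L₁] [LieAlgebra F L₁] [LieRing L₂] [LieAlgebra F L₂]

lemma map_lie_eq_zero_of_isNilpotent (hL₁ : IsAAlgebra F L₁) [LieRing.IsNilpotent K]
    (f : K →ₗ⁅F⁆ L₁) (x y : K) : f ⁅x, y⁆ = 0 := by
  have : IsLieAbelian f.range := hL₁ f.range f.isNilpotent_range
  have hxy := trivial_lie_zero f.range f.range (f.rangeRestrict x) (f.rangeRestrict y)
  simpa using congrArg Subtype.val hxy

lemma of_jointly_injective (hL₁ : IsAAlgebra F L₁) (hL₂ : IsAAlgebra F L₂)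
    (f : L →ₗ⁅F⁆ L₁) (g : L →ₗ⁅F⁆ L₂) (hfg : ∀ z, f z = 0 → g z = 0 → z = 0) :
    IsAAlgebra F L := by
  intro U hU
  have : LieRing.IsNilpotent U := hU
  refine ⟨fun x y => Subtype.ext (hfg _ ?_ ?_)⟩
  · exact hL₁.map_lie_eq_zero_of_isNilpotent (f.comp U.incl) x y
  · exact hL₂.map_lie_eq_zero_of_isNilpotent (g.comp U.incl) x y

end IsAAlgebra

theorem quotient_inf_isAAlgebra_general (F L : Type*) [Field F] [LieRing L] [LieAlgebra F L]
    (B C : LieIdeal F L)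
    (hB : IsAAlgebra F (L ⧸ B)) (hC : IsAAlgebra F (L ⧸ C)) :
    IsAAlgebra F (L ⧸ (B ⊓ C)) := by
  refine hB.of_jointly_injective hC (LieIdeal.quotientMapOfLE inf_le_left)
    (LieIdeal.quotientMapOfLE inf_le_right) ?_
  rintro ⟨a⟩ haB haC
  exact (LieSubmodule.Quotient.mk_eq_zero _).mpr
    ⟨(LieSubmodule.Quotient.mk_eq_zero B).mp haB, (LieSubmodule.Quotient.mk_eq_zero C).mp haC⟩

theorem quotient_inf_isAAlgebra (F L : Type*) [Field F] [LieRing L] [LieAlgebra F L]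
    [FiniteDimensional F L] (B C : LieIdeal F L)
    (hB : IsAAlgebra F (L ⧸ B)) (hC : IsAAlgebra F (L ⧸ C)) :
    IsAAlgebra F (L ⧸ (B ⊓ C)) :=
  quotient_inf_isAAlgebra_general F L B C hB hC
end

section
/- Let L be a finite-dimensional Lie A-algebra over a field F and let I be an ideal of L such that the quotient L/I is nilpotent. Then [L, L] ⊆ I. (Hence the nilpotent residual of L equals [L, L], and by iteration the lower nilpotent series of L coincides with its derived series.) -/
/-!
By induction on `dim L` we show `[L, L] ≤ L^k` for every term `L^k` of the lower central series.
If `L` is nilpotent it is abelian. Otherwise some `ad x` is not nilpotent, so its Engel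
subalgebra `E` is proper. By Fitting's lemma `L = ker (ad x)^n ⊕ range (ad x)^n` for large `n`;
the kernel lies in `E` and the range in `L^k`, so `L = E + L^k`. Since `E` is again an
`A`-algebra, induction gives `[E, E] ≤ E^k ≤ L^k`, whence `[L, L] ≤ [E, E] + L^k = L^k`.
-/

open LieAlgebra LieModule LieSubalgebra

section

variable {R L : Type*} [CommRing R] [LieRing L] [LieAlgebra R L]

lemma LieSubalgebra.engel_ne_top_of_not_isNilpotent_ad [Module.Finite R L] {x : L}
    (hx : ¬ IsNilpotent (ad R L x)) : engel R x ≠ ⊤ := by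
  intro h
  refine hx (Module.End.isNilpotent_iff_of_finite.mpr fun y ↦ ?_)
  exact (mem_engel_iff R x y).mp (h ▸ mem_top y)

lemma LieSubalgebra.engel_sup_lowerCentralSeries_eq_top [IsArtinian R L] (x : L) (k : ℕ) :
    (engel R x).toSubmodule ⊔ (lowerCentralSeries R L L k).toSubmodule = ⊤ := by
  obtain ⟨N, hN⟩ := Filter.eventually_atTop.mp (ad R L x).eventually_codisjoint_ker_pow_range_pow
  set n := max N k
  refine top_unique ((hN n (le_max_left N k)).eq_top ▸ sup_le_sup ?_ ?_)
  · exact fun y hy ↦ (mem_engel_iff R x y).mpr ⟨n, hy⟩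
  · rintro _ ⟨y, rfl⟩
    refine antitone_lowerCentralSeries R L L (le_max_right N k) ?_
    rw [Module.End.pow_apply]
    exact iterate_toEnd_mem_lowerCentralSeries R L L x y n

lemma LieIdeal.lie_mem_of_sup_eq_top {H : LieSubalgebra R L} {I : LieIdeal R L}
    (hHI : H.toSubmodule ⊔ I.toSubmodule = ⊤) (hH : ∀ a ∈ H, ∀ b ∈ H, ⁅a, b⁆ ∈ I) (a b : L) :
    ⁅a, b⁆ ∈ I := by
  obtain ⟨e₁, he₁, i₁, hi₁, rfl⟩ := Submodule.mem_sup.mp (hHI ▸ Submodule.mem_top : a ∈ _)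
  obtain ⟨e₂, he₂, i₂, hi₂, rfl⟩ := Submodule.mem_sup.mp (hHI ▸ Submodule.mem_top : b ∈ _)
  rw [add_lie, lie_add, lie_add]
  exact I.add_mem (I.add_mem (hH e₁ he₁ e₂ he₂) (lie_mem_right R L I e₁ i₂ hi₂))
    (I.add_mem (lie_mem_left R L I i₁ e₂ hi₁) (lie_mem_right R L I i₁ i₂ hi₂))

lemma LieIdeal.exists_lowerCentralSeries_le_of_isNilpotent_quotient {I : LieIdeal R L}
    (hI : LieRing.IsNilpotent (L ⧸ I)) : ∃ k, lowerCentralSeries R L L k ≤ I := by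
  have : LieModule.IsNilpotent L (L ⧸ I) := by
    simp only [LieRing.IsNilpotent, LieModule.isNilpotent_iff R] at hI ⊢
    peel hI with k hk
    simp [← LieSubmodule.toSubmodule_inj, coe_lowerCentralSeries_ideal_quot_eq, hk]
  exact (isNilpotent_quotient_iff R L L I).mp this

end

namespace IsAAlgebra

variable {F L : Type*} [Field F] [LieRing L] [LieAlgebra F L]

lemma of_injective {L' : Type*} [LieRing L'] [LieAlgebra F L'] (hA : IsAAlgebra F L)
    {f : L' →ₗ⁅F⁆ L} (hf : Function.Injective f) : IsAAlgebra F L' := by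
  intro U hU
  let g := f.comp U.incl
  have hg : Function.Injective g.rangeRestrict := fun u v huv ↦
    Subtype.val_injective (hf (Subtype.ext_iff.mp huv))
  exact hg.isLieAbelian (hA g.range g.isNilpotent_range)

lemma lieSubalgebra (hA : IsAAlgebra F L) (H : LieSubalgebra F L) : IsAAlgebra F H :=
  hA.of_injective (f := H.incl) Subtype.val_injective

lemma isLieAbelian [LieRing.IsNilpotent L] (hA : IsAAlgebra F L) : IsLieAbelian L :=
  (LieSubalgebra.topEquiv (R := F)).symm.injective.isLieAbelian
    (hA ⊤ (topEquiv.nilpotent_iff_equiv_nilpotent.mpr inferInstance))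

lemma lie_mem_lowerCentralSeries [FiniteDimensional F L] (hA : IsAAlgebra F L) (k : ℕ)
    (a b : L) : ⁅a, b⁆ ∈ lowerCentralSeries F L L k := by
  induction hn : Module.finrank F L using Nat.strong_induction_on generalizing L with
  | _ n ih =>
    by_cases hL : LieRing.IsNilpotent L
    · have := hA.isLieAbelian
      rw [trivial_lie_zero]
      exact zero_mem _
    obtain ⟨x, hx⟩ := not_forall.mp (mt (LieAlgebra.isNilpotent_iff_forall (R := F)).mpr hL)
    have hE : Module.finrank F (engel F x) < n :=
      hn ▸ Submodule.finrank_lt (by simpa using engel_ne_top_of_not_isNilpotent_ad hx)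
    refine LieIdeal.lie_mem_of_sup_eq_top (engel_sup_lowerCentralSeries_eq_top x k)
      (fun a ha b hb ↦ ?_) a b
    have hab := ih _ hE (hA.lieSubalgebra (engel F x)) ⟨a, ha⟩ ⟨b, hb⟩ rfl
    exact LieIdeal.map_lowerCentralSeries_le k (LieIdeal.mem_map (f := (engel F x).incl) hab)

end IsAAlgebra

theorem derived_le_of_quotient_nilpotent (F L : Type*) [Field F] [LieRing L] [LieAlgebra F L]
    [FiniteDimensional F L] (hA : IsAAlgebra F L) (I : LieIdeal F L)
    (hI : LieModule.IsNilpotent (L ⧸ I) (L ⧸ I)) :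
    LieAlgebra.derivedSeries F L 1 ≤ I := by
  obtain ⟨k, hk⟩ := I.exists_lowerCentralSeries_le_of_isNilpotent_quotient hI
  rw [derivedSeries_def, derivedSeriesOfIdeal_succ, derivedSeriesOfIdeal_zero,
    LieSubmodule.lie_le_iff]
  exact fun a _ b _ ↦ hk (hA.lie_mem_lowerCentralSeries k a b)
end

section
/- Let L be a finite-dimensional monolithic solvable Lie A-algebra over a field F with monolith W, of derived length n+1 (so L^(n+1) = 0 and L^(n) ≠ 0), and let N be the nilradical of L (a nilpotent ideal containing every nilpotent ideal). Then N = L^(n), and N equals the centralizer of W in L: N = {x ∈ L : [x, w] = 0 for all w ∈ W}. -/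
namespace LieModule

variable {R A M : Type*} [CommRing R] [LieRing A] [LieAlgebra R A]
  [AddCommGroup M] [Module R M] [LieRingModule A M] [LieModule R A M]

theorem genWeightSpace_zero_le_maxTrivSubmodule [LieRing.IsNilpotent A]
    (h : ∀ (x : A) (m : M), ⁅x, ⁅x, m⁆⁆ = 0 → ⁅x, m⁆ = 0) :
    genWeightSpace M (0 : A → R) ≤ maxTrivSubmodule R A M := by
  intro m hm x
  obtain ⟨k, hk⟩ := (mem_genWeightSpace M 0 m).1 hm x
  simp only [Pi.zero_apply, zero_smul, sub_zero] at hk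
  clear hm
  induction k generalizing m with
  | zero => simp_all
  | succ k ih => exact h x m (ih (m := ⁅x, m⁆) (by rwa [pow_succ, Module.End.mul_apply] at hk))

variable [IsNoetherian R M] [IsArtinian R M]

theorem isCompl_maxTrivSubmodule_lie_top [LieRing.IsNilpotent A]
    (h : ∀ (x : A) (m : M), ⁅x, ⁅x, m⁆⁆ = 0 → ⁅x, m⁆ = 0) :
    IsCompl (maxTrivSubmodule R A M) ⁅(⊤ : LieIdeal R A), (⊤ : LieSubmodule R A M)⁆ := by
  have hfit := isCompl_genWeightSpace_zero_posFittingComp R A M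
  have h0 : genWeightSpace M (0 : A → R) = maxTrivSubmodule R A M :=
    le_antisymm (genWeightSpace_zero_le_maxTrivSubmodule h)
      fun m hm => (mem_genWeightSpace M 0 m).2 fun x => ⟨1, by simpa using hm x⟩
  have h1 : posFittingComp R A M = ⁅(⊤ : LieIdeal R A), (⊤ : LieSubmodule R A M)⁆ := by
    refine le_antisymm ((posFittingComp_le_iInf_lowerCentralSeries R A M).trans ?_) ?_
    · simpa using iInf_le (lowerCentralSeries R A M) 1
    · rw [LieSubmodule.lie_le_iff]
      intro x _ m _
      obtain ⟨m₀, hm₀, m₁, hm₁, rfl⟩ := (LieSubmodule.mem_sup _ _ m).1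
        (hfit.codisjoint.eq_top ▸ LieSubmodule.mem_top m)
      rw [h0] at hm₀
      rw [lie_add, hm₀ x, zero_add]
      exact (posFittingComp R A M).lie_mem hm₁
  rwa [← h0, ← h1]

variable {K : Type*} [LieRing K] [LieAlgebra R K] [LieRingModule K M] [LieModule R K M]

theorem isCompl_maxTrivSubmodule_lie_top_of_lie_lie_eq_zero
    (hcomm : ∀ (x y : K) (m : M), ⁅⁅x, y⁆, m⁆ = 0)
    (h : ∀ (x : K) (m : M), ⁅x, ⁅x, m⁆⁆ = 0 → ⁅x, m⁆ = 0) :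
    IsCompl (maxTrivSubmodule R K M) ⁅(⊤ : LieIdeal R K), (⊤ : LieSubmodule R K M)⁆ := by
  -- Fitting's decomposition needs a nilpotent algebra: pass to the abelian image of `K` in `End R M`.
  let _ : LieRing (Module.End R M) := LieRing.ofAssociativeRing
  set A := (toEnd R K M).range
  have hact : ∀ (a : A) (m : M), ⁅a, m⁆ = (a : Module.End R M) m := fun _ _ => rfl
  have : IsLieAbelian A := ⟨by
    rintro ⟨_, x, rfl⟩ ⟨_, y, rfl⟩
    ext m
    simp [← lie_lie, hcomm]⟩
  have hfit := isCompl_maxTrivSubmodule_lie_top (R := R) (A := A) (M := M) (by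
    rintro ⟨_, x, rfl⟩ m
    simpa [hact] using h x m)
  rw [← LieSubmodule.isCompl_toSubmodule] at hfit ⊢
  convert hfit using 1
  · ext m
    simp only [LieSubmodule.mem_toSubmodule, mem_maxTrivSubmodule, Subtype.forall, hact]
    exact ⟨fun hm _ ⟨x, hx⟩ => hx ▸ hm x, fun hm x => hm _ ⟨x, rfl⟩⟩
  · rw [LieSubmodule.lieIdeal_oper_eq_linear_span, LieSubmodule.lieIdeal_oper_eq_linear_span]
    congr 1
    ext m
    simp [hact, A, LieHom.mem_range]

end LieModule

namespace LieAlgebra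

theorem isNilpotent_of_lie_lie_eq_zero {R L : Type*} [CommRing R] [LieRing L] [LieAlgebra R L]
    [IsNoetherian R L] (h : ∀ x y : L, ⁅x, ⁅x, y⁆⁆ = 0) : LieRing.IsNilpotent L :=
  (isNilpotent_iff_forall (R := R)).2 fun x => ⟨2, LinearMap.ext fun y => by simp [pow_two, h]⟩

theorem exists_le_not_le_lie_self_le {R L : Type*} [CommRing R] [LieRing L] [LieAlgebra R L]
    [IsSolvable L] {C N : LieIdeal R L} (h : ¬ C ≤ N) :
    ∃ K : LieIdeal R L, K ≤ C ∧ ¬ K ≤ N ∧ ⁅K, K⁆ ≤ N := by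
  classical
  have hex : ∃ k, derivedSeriesOfIdeal R L k C ≤ N := by
    obtain ⟨k, hk⟩ := IsSolvable.solvable R L
    refine ⟨k, (derivedSeriesOfIdeal_mono le_top k).trans ?_⟩
    rw [← derivedSeries_def, hk]
    exact bot_le
  obtain ⟨j, hj⟩ : ∃ j, Nat.find hex = j + 1 :=
    Nat.exists_eq_succ_of_ne_zero fun h0 => h (by simpa [h0] using Nat.find_spec hex)
  refine ⟨derivedSeriesOfIdeal R L j C, derivedSeriesOfIdeal_le_self C j,
    Nat.find_min hex (by omega), ?_⟩
  rw [← derivedSeriesOfIdeal_succ, ← hj]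
  exact Nat.find_spec hex

end LieAlgebra

namespace LieIdeal

variable {R L : Type*} [CommRing R] [LieRing L] [LieAlgebra R L] (K N : LieIdeal R L)

theorem mem_ker_iff (x : L) : x ∈ LieModule.ker R L K ↔ ∀ y ∈ K, ⁅x, y⁆ = 0 := by
  simp [Subtype.ext_iff]

theorem le_ker_comm : K ≤ LieModule.ker R L N ↔ N ≤ LieModule.ker R L K := by
  suffices ∀ K N : LieIdeal R L, K ≤ LieModule.ker R L N → N ≤ LieModule.ker R L K from
    ⟨this K N, this N K⟩
  intro K N h y hy
  rw [mem_ker_iff]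
  intro x hx
  rw [← lie_skew, (mem_ker_iff N x).1 (h hx) y hy, neg_zero]

theorem mem_maxTrivSubmodule_iff (m : N) :
    m ∈ LieModule.maxTrivSubmodule R K N ↔ (m : L) ∈ LieModule.ker R L K := by
  rw [mem_ker_iff]
  simp only [LieModule.mem_maxTrivSubmodule, Subtype.ext_iff, coe_bracket_of_module,
    LieSubmodule.coe_bracket, Subtype.forall, ZeroMemClass.coe_zero]
  exact forall₂_congr fun y _ => by rw [← lie_skew, neg_eq_zero]

theorem mem_lie_top_iff (m : N) :
    m ∈ ⁅(⊤ : LieIdeal R K), (⊤ : LieSubmodule R K N)⁆ ↔ (m : L) ∈ ⁅K, N⁆ := by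
  rw [← LieSubmodule.mem_toSubmodule, LieSubmodule.lieIdeal_oper_eq_linear_span',
    ← LieSubmodule.mem_toSubmodule, LieSubmodule.lieIdeal_oper_eq_linear_span']
  have hgen : {z : L | ∃ x ∈ K, ∃ n ∈ N, ⁅x, n⁆ = z} =
      (LieSubmodule.toSubmodule N).subtype ''
        {z : N | ∃ x ∈ (⊤ : LieIdeal R K), ∃ n ∈ (⊤ : LieSubmodule R K N), ⁅x, n⁆ = z} := by
    ext z
    constructor
    · rintro ⟨x, hx, n, hn, rfl⟩
      have hmem : (⁅(⟨x, hx⟩ : K), (⟨n, hn⟩ : N)⁆ : N) ∈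
          {z : N | ∃ x ∈ (⊤ : LieIdeal R K), ∃ n ∈ (⊤ : LieSubmodule R K N), ⁅x, n⁆ = z} :=
        ⟨⟨x, hx⟩, trivial, ⟨n, hn⟩, trivial, rfl⟩
      exact ⟨_, hmem, rfl⟩
    · rintro ⟨_, ⟨x, -, n, -, rfl⟩, rfl⟩
      exact ⟨x, x.2, n, n.2, rfl⟩
  rw [hgen, Submodule.span_image, Submodule.mem_map]
  exact ⟨fun h => ⟨m, h, rfl⟩, fun ⟨y, hy, hym⟩ => (Subtype.ext hym : y = m) ▸ hy⟩

end LieIdeal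

namespace IsAAlgebra

variable {F L : Type*} [Field F] [LieRing L] [LieAlgebra F L] [FiniteDimensional F L]
  {N K : LieIdeal F L}

theorem exists_isNilpotent_lieSubalgebra (hN : IsLieAbelian N) (x : L) :
    ∃ U : LieSubalgebra F L, LieRing.IsNilpotent U ∧ x ∈ U ∧
      ∀ v ∈ N, ⁅x, ⁅x, v⁆⁆ = 0 → v ∈ U := by
  have hNN : ∀ {a b : L}, a ∈ N → b ∈ N → ⁅a, b⁆ = 0 := fun ha hb =>
    congrArg Subtype.val (hN.trivial ⟨_, ha⟩ ⟨_, hb⟩)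
  set Z : Submodule F L := (N : Submodule F L) ⊓ LinearMap.ker (LieAlgebra.ad F L x ^ 2)
  have hZ : ∀ {y : L}, y ∈ Z ↔ y ∈ N ∧ ⁅x, ⁅x, y⁆⁆ = 0 := by
    simp [Z, pow_two]
  have hU : ∀ {u : L}, u ∈ (F ∙ x) ⊔ Z → ∃ c : F, ∃ y ∈ Z, c • x + y = u := by
    intro u hu
    obtain ⟨_, hc, y, hy, rfl⟩ := Submodule.mem_sup.1 hu
    obtain ⟨c, rfl⟩ := Submodule.mem_span_singleton.1 hc
    exact ⟨c, y, hy, rfl⟩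
  have hbracket : ∀ {u w : L}, u ∈ (F ∙ x) ⊔ Z → w ∈ (F ∙ x) ⊔ Z →
      ⁅u, w⁆ ∈ N ∧ ⁅x, ⁅u, w⁆⁆ = 0 := by
    intro u w hu hw
    obtain ⟨c, y, hy, rfl⟩ := hU hu
    obtain ⟨d, z, hz, rfl⟩ := hU hw
    rw [hZ] at hy hz
    have hexp : ⁅c • x + y, d • x + z⁆ = c • ⁅x, z⁆ - d • ⁅x, y⁆ := by
      simp only [lie_add, add_lie, lie_smul, smul_lie, lie_self, ← lie_skew x y, hNN hy.1 hz.1]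
      module
    rw [hexp, lie_sub, lie_smul, lie_smul, hy.2, hz.2, smul_zero, smul_zero, sub_zero]
    exact ⟨sub_mem (N.smul_mem c (N.lie_mem hz.1)) (N.smul_mem d (N.lie_mem hy.1)), rfl⟩
  have hcent : ∀ {u y : L}, u ∈ (F ∙ x) ⊔ Z → y ∈ N → ⁅x, y⁆ = 0 → ⁅u, y⁆ = 0 := by
    intro u y hu hy hxy
    obtain ⟨c, z, hz, rfl⟩ := hU hu
    rw [add_lie, smul_lie, hxy, hNN (hZ.1 hz).1 hy, smul_zero, add_zero]
  let U : LieSubalgebra F L :=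
    { toSubmodule := (F ∙ x) ⊔ Z
      lie_mem' := fun hu hw => Submodule.mem_sup_right <|
        hZ.2 ⟨(hbracket hu hw).1, by rw [(hbracket hu hw).2, lie_zero]⟩ }
  refine ⟨U, LieAlgebra.isNilpotent_of_lie_lie_eq_zero (R := F) fun u w => ?_,
    Submodule.mem_sup_left (Submodule.mem_span_singleton_self x),
    fun v hv h2 => Submodule.mem_sup_right (hZ.2 ⟨hv, h2⟩)⟩
  exact Subtype.ext <| hcent u.2 (hbracket u.2 w.2).1 (hbracket u.2 w.2).2

theorem lie_eq_zero_of_lie_lie_eq_zero (hA : IsAAlgebra F L) (hN : IsLieAbelian N) (x : L)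
    {v : L} (hv : v ∈ N) (h2 : ⁅x, ⁅x, v⁆⁆ = 0) : ⁅x, v⁆ = 0 := by
  obtain ⟨U, hU, hxU, hNU⟩ := exists_isNilpotent_lieSubalgebra hN x
  exact congrArg Subtype.val ((hA U hU).trivial ⟨x, hxU⟩ ⟨v, hNU v hv h2⟩)

theorem isCompl_maxTrivSubmodule_lie_top (hA : IsAAlgebra F L) (hN : IsLieAbelian N)
    (hKK : ⁅K, K⁆ ≤ N) :
    IsCompl (LieModule.maxTrivSubmodule F K N) ⁅(⊤ : LieIdeal F K), (⊤ : LieSubmodule F K N)⁆ := by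
  refine LieModule.isCompl_maxTrivSubmodule_lie_top_of_lie_lie_eq_zero (fun x y m => ?_)
    (fun x m h => ?_)
  · exact hN.trivial ⟨⁅(x : L), (y : L)⁆, hKK (LieSubmodule.lie_mem_lie x.2 y.2)⟩ m
  · have h' : ⁅(x : L), ⁅(x : L), (m : L)⁆⁆ = 0 := congrArg Subtype.val h
    exact Subtype.ext (hA.lie_eq_zero_of_lie_lie_eq_zero hN x m.2 h')

theorem disjoint_inf_ker_lie (hA : IsAAlgebra F L) (hN : IsLieAbelian N) (hKK : ⁅K, K⁆ ≤ N) :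
    Disjoint (N ⊓ LieModule.ker F L K) ⁅K, N⁆ := by
  have hc := LieSubmodule.isCompl_toSubmodule.2 (hA.isCompl_maxTrivSubmodule_lie_top hN hKK)
  rw [disjoint_iff, LieSubmodule.eq_bot_iff]
  rintro v ⟨⟨hvN, hvK⟩, hv⟩
  have := Submodule.disjoint_def.1 hc.disjoint ⟨v, hvN⟩
    ((LieIdeal.mem_maxTrivSubmodule_iff K N _).2 hvK) ((LieIdeal.mem_lie_top_iff K N _).2 hv)
  exact congrArg Subtype.val this

theorem le_lie_of_inf_ker_eq_bot (hA : IsAAlgebra F L) (hN : IsLieAbelian N) (hKK : ⁅K, K⁆ ≤ N)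
    (h : N ⊓ LieModule.ker F L K = ⊥) : N ≤ ⁅K, N⁆ := by
  have hbot : LieModule.maxTrivSubmodule F K N = ⊥ := by
    rw [LieSubmodule.eq_bot_iff]
    intro m hm
    have : (m : L) ∈ N ⊓ LieModule.ker F L K :=
      ⟨m.2, (LieIdeal.mem_maxTrivSubmodule_iff K N m).1 hm⟩
    rw [h, LieSubmodule.mem_bot] at this
    exact Subtype.ext this
  have htop := eq_top_of_bot_isCompl (hbot ▸ hA.isCompl_maxTrivSubmodule_lie_top hN hKK)
  intro v hv
  exact (LieIdeal.mem_lie_top_iff K N ⟨v, hv⟩).1 (by rw [htop]; exact LieSubmodule.mem_top _)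

theorem ker_le_of_monolith (hA : IsAAlgebra F L) [LieAlgebra.IsSolvable L] {W : LieIdeal F L}
    (hWne : W ≠ ⊥) (hWmono : ∀ I : LieIdeal F L, I ≠ ⊥ → W ≤ I) (hN : IsLieAbelian N)
    (hNmax : ∀ I : LieIdeal F L, LieModule.IsNilpotent I I → I ≤ N) (hWN : W ≤ N) :
    LieModule.ker F L W ≤ N := by
  by_contra hC
  obtain ⟨K, hKC, hKN, hKK⟩ := LieAlgebra.exists_le_not_le_lie_self_le hC
  have hKN_bot : ⁅K, N⁆ = ⊥ := by
    by_contra hne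
    have hWK : W ≤ N ⊓ LieModule.ker F L K := le_inf hWN ((LieIdeal.le_ker_comm K W).1 hKC)
    exact hWne (disjoint_self.1 ((hA.disjoint_inf_ker_lie hN hKK).mono hWK (hWmono _ hne)))
  refine hKN (hNmax K (LieAlgebra.isNilpotent_of_lie_lie_eq_zero (R := F) fun u z => ?_))
  exact Subtype.ext ((LieSubmodule.lie_eq_bot_iff _ _).1 hKN_bot u u.2 _
    (hKK (LieSubmodule.lie_mem_lie u.2 z.2)))

theorem le_lie_self_of_eq_ker (hA : IsAAlgebra F L) {W : LieIdeal F L}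
    (hWmono : ∀ I : LieIdeal F L, I ≠ ⊥ → W ≤ I) (hN : IsLieAbelian N)
    (hNW : N = LieModule.ker F L W) (hKK : ⁅K, K⁆ ≤ N) (hK : ⁅K, K⁆ ≠ ⊥) : N ≤ ⁅K, K⁆ := by
  have hC : N ⊓ LieModule.ker F L K = ⊥ := by
    by_contra hne
    have hKN : K ≤ N := hNW ▸ (LieIdeal.le_ker_comm K W).2 ((hWmono _ hne).trans inf_le_right)
    refine hK (le_bot_iff.1 ?_)
    rw [← (LieSubmodule.lie_abelian_iff_lie_self_eq_bot N).1 hN]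
    exact LieSubmodule.mono_lie hKN hKN
  have hNKN := hA.le_lie_of_inf_ker_eq_bot hN hKK hC
  exact hNKN.trans (LieSubmodule.mono_lie_right K (hNKN.trans (LieSubmodule.lie_le_left K N)))

end IsAAlgebra

theorem monolith_nilradical (F L : Type*) [Field F] [LieRing L] [LieAlgebra F L]
    [FiniteDimensional F L] [LieAlgebra.IsSolvable L] (hA : IsAAlgebra F L)
    (W : LieIdeal F L) (hWne : W ≠ ⊥)
    (hWmono : ∀ I : LieIdeal F L, I ≠ ⊥ → W ≤ I) (n : ℕ)
    (hlen : LieAlgebra.derivedSeries F L (n + 1) = ⊥ ∧ LieAlgebra.derivedSeries F L n ≠ ⊥)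
    (N : LieIdeal F L) (hNnil : LieModule.IsNilpotent N N)
    (hNmax : ∀ I : LieIdeal F L, LieModule.IsNilpotent I I → I ≤ N) :
    N = LieAlgebra.derivedSeries F L n ∧
    ∀ x : L, x ∈ N ↔ ∀ w ∈ W, ⁅x, w⁆ = 0 := by
  have hNab : IsLieAbelian N := hA N hNnil
  have hlie_succ : ∀ k, ⁅LieAlgebra.derivedSeries F L k, LieAlgebra.derivedSeries F L k⁆ =
      LieAlgebra.derivedSeries F L (k + 1) := fun k => by
    simp only [LieAlgebra.derivedSeries_def, LieAlgebra.derivedSeriesOfIdeal_succ]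
  have hDN : LieAlgebra.derivedSeries F L n ≤ N := by
    have := (LieSubmodule.lie_abelian_iff_lie_self_eq_bot _).2 ((hlie_succ n).trans hlen.1)
    exact hNmax _ inferInstance
  have hWN : W ≤ N := (hWmono _ hlen.2).trans hDN
  have hNW : N = LieModule.ker F L W := le_antisymm
    ((LieIdeal.le_ker_comm N W).2 (hWN.trans ((LieIdeal.isLieAbelian_iff F L).1 hNab)))
    (hA.ker_le_of_monolith hWne hWmono hNab hNmax hWN)
  refine ⟨le_antisymm ?_ hDN, fun x => by rw [hNW, LieIdeal.mem_ker_iff]⟩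
  cases n with
  | zero => exact le_top
  | succ n =>
    rw [← hlie_succ n] at hDN hlen ⊢
    exact hA.le_lie_self_of_eq_ker hWmono hNab hNW hDN hlen.2
end
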